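/- arXiv:2503.20367 — 5 statements merged into one kernel-verified Lean document; each statement's English description precedes it below -/
import Mathlib

section
/- Let p be a prime with p > 3, let s ≥ 1, and set n = 2p^s. Let S = {1, 3, p^s − 3, 2p^s − 1, 2p^s − 3, p^s + 3} ⊆ ℤ_n. Then the circulant graph Cay(ℤ_n, S) does not exhibit FR between any pair of distinct vertices. -/
/-!
For every additive character `χ` of `ℤ_{2q}` (here `q = p^s`) the vector `χ` is a left eigenvector
of `A`, hence of `H(t)`, so `H(t) e_a = α e_a + β e_b` forces `exp (-i t λ_χ) = α + β χ(b - a)`.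
Since `S = -S`, the characters `χ` and `χ⁻¹` have the same eigenvalue, so `χ(b - a)² = 1` for all
`χ` and `b - a = q`. For odd `m`, the character `x ↦ exp (π i m x / q)` is `-1` at `q`, the terms of
`±3` and `q ± 3` cancel, and the eigenvalue is `2 cos (π m / q)`; hence
`t (2 cos (π / q) - 2 cos (π m / q)) ∈ 2πℤ` for all odd `m`. Taking `m = q` and `m = q - 2` makes
`2 cos (π / q) - 1` rational, which Niven's theorem forbids.
-/

open Matrix Filter

/-- Adjacency matrix of the Cayley graph `Cay(G,S)`: `A x y = 1` iff `x - y ∈ S`. -/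
noncomputable def cayAdj {G : Type*} [AddCommGroup G] [Fintype G] [DecidableEq G]
    (S : Finset G) : Matrix G G ℂ :=
  Matrix.of fun x y => if x - y ∈ S then 1 else 0

/-- Transition matrix `H(t) = exp(-i t A)` of the Cayley graph `Cay(G,S)`. -/
noncomputable def cayH {G : Type*} [AddCommGroup G] [Fintype G] [DecidableEq G]
    (S : Finset G) (t : ℝ) : Matrix G G ℂ :=
  NormedSpace.exp ((-(Complex.I * (t : ℂ))) • cayAdj S)

/-- `Cay(G,S)` exhibits pretty good fractional revival (PGFR) between `a` and `b`. -/
def ExhibitsPGFR {G : Type*} [AddCommGroup G] [Fintype G] [DecidableEq G]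
    (S : Finset G) (a b : G) : Prop :=
  ∃ (α β : ℂ) (t : ℕ → ℝ), β ≠ 0 ∧ ‖α‖ ^ 2 + ‖β‖ ^ 2 = 1 ∧
    Tendsto (fun k => (cayH S (t k)).mulVec ((Pi.single a 1 : G → ℂ))) atTop
      (nhds (α • (Pi.single a 1 : G → ℂ) + β • (Pi.single b 1 : G → ℂ)))

/-- `Cay(G,S)` exhibits fractional revival (FR) between `a` and `b`. -/
def ExhibitsFR {G : Type*} [AddCommGroup G] [Fintype G] [DecidableEq G]
    (S : Finset G) (a b : G) : Prop :=
  ∃ (t : ℝ), 0 < t ∧ ∃ α β : ℂ, β ≠ 0 ∧ ‖α‖ ^ 2 + ‖β‖ ^ 2 = 1 ∧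
    (cayH S t).mulVec ((Pi.single a 1 : G → ℂ)) =
      α • (Pi.single a 1 : G → ℂ) + β • (Pi.single b 1 : G → ℂ)

/-- `Cay(G,S)` exhibits pretty good state transfer (PGST) between `a` and `b`. -/
def ExhibitsPGST {G : Type*} [AddCommGroup G] [Fintype G] [DecidableEq G]
    (S : Finset G) (a b : G) : Prop :=
  ∃ (β : ℂ) (t : ℕ → ℝ), ‖β‖ = 1 ∧
    Tendsto (fun k => (cayH S (t k)).mulVec ((Pi.single a 1 : G → ℂ))) atTop
      (nhds (β • (Pi.single b 1 : G → ℂ)))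

/-- The eigenvalue `λ_r = Σ_{y ∈ S} exp(2πi r y / n)` of the circulant graph `Cay(ℤ_n, S)`. -/
noncomputable def circEig (n : ℕ) [NeZero n] (S : Finset (ZMod n)) (r : ℕ) : ℂ :=
  ∑ y ∈ S, Complex.exp (2 * Real.pi * Complex.I * r * y.val / n)

section MatrixExp

open scoped Norms.Operator

variable {𝕂 ι : Type*} [RCLike 𝕂] [Fintype ι] [DecidableEq ι]

theorem Matrix.vecMul_exp_of_vecMul_eq_smul {B : Matrix ι ι 𝕂} {w : ι → 𝕂} {ν : 𝕂}
    (h : w ᵥ* B = ν • w) : w ᵥ* NormedSpace.exp B = NormedSpace.exp ν • w := by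
  have hpow (k : ℕ) : w ᵥ* B ^ k = ν ^ k • w := by
    induction k with
    | zero => simp
    | succ k ih => rw [pow_succ, ← vecMul_vecMul, ih, smul_vecMul, h, smul_smul, pow_succ]
  let L : Matrix ι ι 𝕂 →+ (ι → 𝕂) := AddMonoidHom.mk' (w ᵥ* ·) fun M N => vecMul_add M N w
  have hL : Continuous L := continuous_const.matrix_vecMul continuous_id
  have hsum := (NormedSpace.exp_series_hasSum_exp' (𝕂 := 𝕂) B).map L hL
  refine hsum.unique ?_
  convert (NormedSpace.exp_series_hasSum_exp' (𝕂 := 𝕂) ν).smul_const w using 2 with k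
  simp [L, vecMul_smul, hpow, smul_smul]

end MatrixExp

section CayleyGraph

open Complex

variable {G : Type*} [AddCommGroup G] [Fintype G] [DecidableEq G]

theorem vecMul_cayAdj_addChar (S : Finset G) (ψ : AddChar G ℂ) :
    ⇑ψ ᵥ* cayAdj S = (∑ u ∈ S, ψ u) • ⇑ψ := by
  ext y
  simp only [vecMul, dotProduct, cayAdj, of_apply, mul_ite, mul_one, mul_zero, Pi.smul_apply,
    smul_eq_mul, Finset.sum_mul, ← Finset.sum_filter]
  refine Finset.sum_nbij' (· - y) (· + y) (by simp) (by simp) (by simp) (by simp) fun x _ => ?_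
  rw [← AddChar.map_add_eq_mul, sub_add_cancel]

theorem vecMul_cayH_addChar (S : Finset G) (ψ : AddChar G ℂ) (t : ℝ) :
    ⇑ψ ᵥ* cayH S t = exp (-(I * t) * ∑ u ∈ S, ψ u) • ⇑ψ := by
  rw [cayH, vecMul_exp_of_vecMul_eq_smul (by rw [vecMul_smul, vecMul_cayAdj_addChar, smul_smul]),
    exp_eq_exp_ℂ]

theorem exp_sum_addChar_eq_of_mulVec_single {S : Finset G} {t : ℝ} {a b : G} {α β : ℂ}
    (h : cayH S t *ᵥ Pi.single a 1 = α • Pi.single a 1 + β • Pi.single b 1)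
    (ψ : AddChar G ℂ) : exp (-(I * t) * ∑ u ∈ S, ψ u) = α + β * ψ (b - a) := by
  have h' := congrArg (⇑ψ ⬝ᵥ ·) h
  simp only [dotProduct_mulVec, vecMul_cayH_addChar, dotProduct_add, dotProduct_smul,
    dotProduct_single, Pi.smul_apply, smul_eq_mul, mul_one] at h'
  have ha := (ψ.val_isUnit a).ne_zero
  rw [AddChar.map_sub_eq_div, mul_div_assoc', add_div' _ _ _ ha, eq_div_iff ha, h']

theorem ExhibitsFR.two_nsmul_sub_eq_zero {S : Finset G} (hS : ∀ u ∈ S, -u ∈ S) {a b : G}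
    (h : ExhibitsFR S a b) : 2 • (b - a) = 0 := by
  obtain ⟨t, -, α, β, hβ, -, h⟩ := h
  have hsum (ψ : AddChar G ℂ) : ∑ u ∈ S, ψ⁻¹ u = ∑ u ∈ S, ψ u :=
    Finset.sum_nbij' Neg.neg Neg.neg hS hS (by simp) (by simp) (by simp)
  refine AddChar.forall_apply_eq_zero.1 fun ψ => ?_
  have := exp_sum_addChar_eq_of_mulVec_single h ψ⁻¹
  rw [hsum, exp_sum_addChar_eq_of_mulVec_single h ψ, add_right_inj, mul_right_inj' hβ,
    AddChar.inv_apply'] at this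
  rw [AddChar.map_nsmul_eq_pow, sq]
  nth_rw 2 [this]
  exact mul_inv_cancel₀ (ψ.val_isUnit _).ne_zero

end CayleyGraph

theorem ZMod.natCast_self_sub {n k : ℕ} (h : k ≤ n) : ((n - k : ℕ) : ZMod n) = -k := by
  rw [Nat.cast_sub h, ZMod.natCast_self, zero_sub]

section ZModTwoMul

variable {q : ℕ}

theorem ZMod.neg_natCast_two_mul_self : -(q : ZMod (2 * q)) = q := by
  rw [neg_eq_iff_add_eq_zero, ← Nat.cast_add, ← two_mul, ZMod.natCast_self]

theorem ZMod.eq_natCast_of_two_nsmul_eq_zero [NeZero q] {c : ZMod (2 * q)} (h : 2 • c = 0)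
    (hc : c ≠ 0) : c = q := by
  have hdvd : 2 * q ∣ 2 * c.val := by
    rw [← ZMod.natCast_eq_zero_iff, Nat.cast_mul, ← nsmul_eq_mul, ZMod.natCast_zmod_val, h]
  obtain ⟨k, hk⟩ := (Nat.mul_dvd_mul_iff_left two_pos).1 hdvd
  have hlt := c.val_lt
  have hpos := (ZMod.val_ne_zero c).2 hc
  obtain rfl : k = 1 := by
    rcases k with _ | _ | k
    · omega
    · rfl
    · nlinarith
  rw [← ZMod.natCast_zmod_val c, hk, mul_one]

open Real Complex in
theorem ZMod.stdAddChar_natCast_mul_natCast_of_odd [NeZero q] {m : ℕ} (hm : Odd m) :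
    ZMod.stdAddChar ((m : ZMod (2 * q)) * (q : ZMod (2 * q))) = -1 := by
  have hq : (q : ℂ) ≠ 0 := Nat.cast_ne_zero.2 (NeZero.ne q)
  rw [← Nat.cast_mul, ← Int.cast_natCast, ZMod.stdAddChar_coe]
  have : 2 * π * I * ((m * q : ℕ) : ℤ) / ((2 * q : ℕ) : ℂ) = m * (π * I) := by
    push_cast
    field_simp
  rw [this, Complex.exp_nat_mul, exp_pi_mul_I, hm.neg_one_pow]

open Real Complex in
theorem ZMod.stdAddChar_natCast_add_stdAddChar_neg [NeZero q] (m : ℕ) :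
    ZMod.stdAddChar (m : ZMod (2 * q)) + ZMod.stdAddChar (-(m : ZMod (2 * q))) =
      ((2 * Real.cos (π * m / q) : ℝ) : ℂ) := by
  have hq : (q : ℂ) ≠ 0 := Nat.cast_ne_zero.2 (NeZero.ne q)
  rw [← Int.cast_natCast, ← Int.cast_neg, ZMod.stdAddChar_coe, ZMod.stdAddChar_coe]
  push_cast
  rw [two_cos]
  congr 2 <;> field_simp

end ZModTwoMul

section ConnectionSet

variable {q : ℕ}

def connectionSet (q : ℕ) : Finset (ZMod (2 * q)) :=
  {((1 : ℕ) : ZMod (2 * q)), ((3 : ℕ) : ZMod (2 * q)), ((q - 3 : ℕ) : ZMod (2 * q)),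
    ((2 * q - 1 : ℕ) : ZMod (2 * q)), ((2 * q - 3 : ℕ) : ZMod (2 * q)),
    ((q + 3 : ℕ) : ZMod (2 * q))}

theorem connectionSet_eq (hq : 3 ≤ q) :
    connectionSet q = {1, 3, (q : ZMod (2 * q)) - 3, -1, -3, (q : ZMod (2 * q)) + 3} := by
  simp only [connectionSet, ZMod.natCast_self_sub (by omega : 1 ≤ 2 * q),
    ZMod.natCast_self_sub (by omega : 3 ≤ 2 * q), Nat.cast_sub hq, Nat.cast_add, Nat.cast_one,
    Nat.cast_ofNat]

theorem neg_mem_connectionSet (hq : 3 ≤ q) {u : ZMod (2 * q)} (hu : u ∈ connectionSet q) :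
    -u ∈ connectionSet q := by
  rw [connectionSet_eq hq] at hu ⊢
  simp only [Finset.mem_insert, Finset.mem_singleton] at hu ⊢
  rcases hu with rfl | rfl | rfl | rfl | rfl | rfl <;>
    simp [neg_add_rev, ZMod.neg_natCast_two_mul_self, sub_eq_add_neg, add_comm]

theorem sum_connectionSet {M : Type*} [AddCommMonoid M] (hq : 5 ≤ q) (hodd : Odd q)
    (f : ZMod (2 * q) → M) :
    ∑ u ∈ connectionSet q, f u =
      f 1 + f 3 + f (q - 3) + f (-1) + f (-3) + f (q + 3) := by
  let T : Finset ℕ := {1, 3, q - 3, 2 * q - 1, 2 * q - 3, q + 3}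
  have hT : connectionSet q = T.image (↑) := by simp [connectionSet, T]
  have hinj : Set.InjOn ((↑) : ℕ → ZMod (2 * q)) T := by
    intro x hx y hy hxy
    have hlt : ∀ z ∈ T, z < 2 * q := by simp [T]; omega
    rw [← ZMod.val_cast_of_lt (hlt x hx), hxy, ZMod.val_cast_of_lt (hlt y hy)]
  rw [hT, Finset.sum_image hinj]
  obtain ⟨k, rfl⟩ := hodd
  simp only [T]
  repeat rw [Finset.sum_insert (by simp only [Finset.mem_insert, Finset.mem_singleton]; omega)]
  simp only [Finset.sum_singleton, ZMod.natCast_self_sub (by omega : 1 ≤ 2 * (2 * k + 1)),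
    ZMod.natCast_self_sub (by omega : 3 ≤ 2 * (2 * k + 1)), Nat.cast_sub (by omega : 3 ≤ 2 * k + 1),
    Nat.cast_add, Nat.cast_one, Nat.cast_ofNat]
  abel

theorem sum_connectionSet_addChar (hq : 5 ≤ q) (hodd : Odd q)
    (ψ : AddChar (ZMod (2 * q)) ℂ) (hψ : ψ q = -1) :
    ∑ u ∈ connectionSet q, ψ u = ψ 1 + ψ (-1) := by
  rw [sum_connectionSet hq hodd, sub_eq_add_neg, ψ.map_add_eq_mul, ψ.map_add_eq_mul, hψ]
  ring

end ConnectionSet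

section Spectrum

open Real

variable {q : ℕ}

theorem irrational_two_mul_cos_pi_div (hq : 3 < q) : Irrational (2 * cos (π / q)) := by
  have h := irrational_cos_rat_mul_pi (r := (q : ℚ)⁻¹)
    (by rw [Rat.inv_natCast_den_of_pos (by omega)]; exact hq)
  push_cast at h
  rw [inv_mul_eq_div] at h
  exact_mod_cast h.natCast_mul two_ne_zero

theorem exists_int_of_exp_neg_I_mul_eq {t x y : ℝ}
    (h : Complex.exp (-(Complex.I * t) * x) = Complex.exp (-(Complex.I * t) * y)) :
    ∃ k : ℤ, t * (y - x) = 2 * π * k := by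
  obtain ⟨k, hk⟩ := Complex.exp_eq_exp_iff_exists_int.1 h
  refine ⟨k, ?_⟩
  have : ((t * (y - x) : ℝ) : ℂ) * Complex.I = ((2 * π * k : ℝ) : ℂ) * Complex.I := by
    push_cast
    linear_combination hk
  exact_mod_cast mul_right_cancel₀ Complex.I_ne_zero this

theorem exists_odd_exp_two_mul_cos_ne (hq : 3 < q) (hodd : Odd q) {t : ℝ} (ht : t ≠ 0) :
    ∃ m : ℕ, Odd m ∧
      Complex.exp (-(Complex.I * t) * (2 * cos (π * m / q) : ℝ)) ≠
        Complex.exp (-(Complex.I * t) * (2 * cos (π / q) : ℝ)) := by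
  by_contra! h
  have hperiod (m : ℕ) (hm : Odd m) :
      ∃ k : ℤ, t * (2 * cos (π / q) - 2 * cos (π * m / q)) = 2 * π * k :=
    exists_int_of_exp_neg_I_mul_eq (h m hm)
  set x := 2 * cos (π / q)
  have hx := irrational_two_mul_cos_pi_div hq
  have hcos_q : 2 * cos (π * q / q) = -2 := by
    rw [mul_div_cancel_right₀ _ (by positivity), cos_pi]; norm_num
  have hcos_q_sub_two : 2 * cos (π * (q - 2 : ℕ) / q) = 2 - x ^ 2 := by
    have : π * (q - 2 : ℕ) / q = π - 2 * (π / q) := by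
      rw [Nat.cast_sub (by omega), Nat.cast_ofNat]; field_simp
    rw [this, cos_pi_sub, cos_two_mul]; ring
  obtain ⟨k₁, hk₁⟩ := hperiod q hodd
  obtain ⟨k₂, hk₂⟩ := hperiod (q - 2) (by obtain ⟨j, hj⟩ := hodd; exact ⟨j - 1, by omega⟩)
  rw [hcos_q] at hk₁
  rw [hcos_q_sub_two] at hk₂
  have hk₁ne : k₁ ≠ 0 := by
    rintro rfl
    have : x + 2 = 0 := by simpa [ht] using hk₁
    exact hx.ne_int (-2) (by push_cast; linarith)
  -- `x - (2 - x ^ 2) = (x + 2) * (x - 1)`, so `x - 1 = k₂ / k₁` would be rational.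
  have : (x - 1) * k₁ = k₂ := by
    refine mul_left_cancel₀ (by positivity : 2 * π ≠ 0) ?_
    linear_combination hk₂ - (x - 1) * hk₁
  exact ((hx.sub_intCast 1).mul_intCast hk₁ne).ne_int k₂ (by exact_mod_cast this)

end Spectrum

open Real in
theorem not_exhibitsFR_connectionSet {q : ℕ} [NeZero q] (hq : 5 ≤ q) (hodd : Odd q)
    {a b : ZMod (2 * q)} (hab : a ≠ b) : ¬ ExhibitsFR (connectionSet q) a b := by
  intro hFR
  have hba : b - a = q := ZMod.eq_natCast_of_two_nsmul_eq_zero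
    (hFR.two_nsmul_sub_eq_zero fun _ => neg_mem_connectionSet (by omega)) (sub_ne_zero.2 hab.symm)
  obtain ⟨t, ht, α, β, -, -, h⟩ := hFR
  have hphase (m : ℕ) (hm : Odd m) :
      Complex.exp (-(Complex.I * t) * (2 * cos (π * m / q) : ℝ)) = α - β := by
    let ψ := (ZMod.stdAddChar (N := 2 * q)).mulShift m
    have hψq : ψ q = -1 := ZMod.stdAddChar_natCast_mul_natCast_of_odd hm
    have := exp_sum_addChar_eq_of_mulVec_single h ψ
    rwa [sum_connectionSet_addChar hq hodd ψ hψq, hba, hψq, mul_neg_one, ← sub_eq_add_neg,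
      AddChar.mulShift_apply, AddChar.mulShift_apply, mul_one, mul_neg_one,
      ZMod.stdAddChar_natCast_add_stdAddChar_neg] at this
  obtain ⟨m, hm, hne⟩ := exists_odd_exp_two_mul_cos_ne (by omega) hodd ht.ne'
  exact hne ((hphase m hm).trans (by simpa using (hphase 1 odd_one).symm))

theorem stmt_8 (p s n : ℕ) [NeZero n] (hp : p.Prime) (hp3 : 3 < p) (hs : 1 ≤ s)
    (hn : n = 2 * p ^ s) :
    ∀ a b : ZMod n, a ≠ b →
      ¬ ExhibitsFR
          ({((1 : ℕ) : ZMod n), ((3 : ℕ) : ZMod n), ((p ^ s - 3 : ℕ) : ZMod n),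
            ((2 * p ^ s - 1 : ℕ) : ZMod n), ((2 * p ^ s - 3 : ℕ) : ZMod n),
            ((p ^ s + 3 : ℕ) : ZMod n)} : Finset (ZMod n)) a b := by
  intro a b hab
  subst hn
  have hp5 : 5 ≤ p := hp.five_le_of_ne_two_of_ne_three (by omega) (by omega)
  have : NeZero (p ^ s) := ⟨by positivity⟩
  exact not_exhibitsFR_connectionSet (hp5.trans (Nat.le_self_pow (by omega) p))
    (hp.odd_of_ne_two (by omega)).pow hab
end

section
/- Let n ≥ 2 be an integer. The complete graph K_n, realized as the Cayley graph Cay(ℤ_n, ℤ_n \ {0}), exhibits PGFR between some pair of distinct vertices if and only if n = 2. -/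
/-!
Every permutation of the vertices of the complete graph is an automorphism, hence commutes with
the adjacency matrix `A` and with `H(t) = exp(-itA)`. So for `n ≥ 3` the amplitudes of `H(t) e_a`
at any two vertices other than `a` agree for all `t`; a PGFR limit `α e_a + β e_b` would then have
`β` equal to its (zero) coordinate at a third vertex. For `n = 2` the adjacency matrix is an
involution, so `H(t) = cos t - i sin t A`, and at `t = π/2` the walk is perfect state transfer
`H(π/2) e_0 = -i e_1`.
-/

open Matrix Filter

open NormedSpace

theorem Matrix.exp_submatrix_equiv {m n 𝔸 : Type*} [Fintype m] [DecidableEq m] [Fintype n]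
    [DecidableEq n] [Ring 𝔸] [TopologicalSpace 𝔸] [IsTopologicalRing 𝔸] [T2Space 𝔸]
    [Algebra ℚ 𝔸] (e : n ≃ m) (A : Matrix m m 𝔸) :
    exp (A.submatrix e e) = (exp A).submatrix e e := by
  let φ := reindexAlgEquiv ℚ 𝔸 e.symm
  have hφ (M : Matrix m m 𝔸) : φ M = M.submatrix e e := rfl
  have hcont : Continuous φ := continuous_id.matrix_submatrix _ _
  have hcont' : Continuous φ.symm := continuous_id.matrix_submatrix _ _
  simp only [exp_eq_tsum_rat, ← hφ, ← map_pow, ← map_smul]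
  exact (Function.LeftInverse.map_tsum _ (g := φ.toAddEquiv) hcont hcont' φ.symm_apply_apply).symm

theorem exp_smul_of_sq_eq_one {𝔸 : Type*} [Ring 𝔸] [Algebra ℂ 𝔸] [TopologicalSpace 𝔸]
    [IsTopologicalRing 𝔸] [ContinuousSMul ℂ 𝔸] [T2Space 𝔸] {x : 𝔸} (hx : x ^ 2 = 1) (z : ℂ) :
    exp (z • x) = Complex.cosh z • (1 : 𝔸) + Complex.sinh z • x := by
  rw [exp_eq_tsum ℂ]
  refine HasSum.tsum_eq (HasSum.even_add_odd ?_ ?_)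
  · convert (Complex.hasSum_cosh z).smul_const (1 : 𝔸) using 2 with k
    rw [smul_pow, pow_mul x, hx, one_pow, smul_smul, div_eq_inv_mul]
  · convert (Complex.hasSum_sinh z).smul_const x using 2 with k
    rw [smul_pow, pow_succ x, pow_mul x, hx, one_pow, one_mul, smul_smul, div_eq_inv_mul]

section CompleteGraph

variable {G : Type*} [AddCommGroup G] [Fintype G] [DecidableEq G]

theorem cayAdj_univ_sdiff_zero_apply (x y : G) :
    cayAdj (Finset.univ \ {0}) x y = if x = y then 0 else 1 := by
  simp only [cayAdj, of_apply, Finset.mem_sdiff, Finset.mem_univ, Finset.mem_singleton,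
    true_and, sub_eq_zero, ite_not]

theorem cayH_univ_sdiff_zero_submatrix (t : ℝ) (e : G ≃ G) :
    (cayH (Finset.univ \ {0}) t).submatrix e e = cayH (Finset.univ \ {0}) t := by
  rw [cayH, ← exp_submatrix_equiv]
  congr 1
  ext x y
  simp only [submatrix_apply, Matrix.smul_apply, cayAdj_univ_sdiff_zero_apply, e.injective.eq_iff]

theorem cayH_univ_sdiff_zero_apply_eq (t : ℝ) {a b c : G} (hb : b ≠ a) (hc : c ≠ a) :
    cayH (Finset.univ \ {0}) t b a = cayH (Finset.univ \ {0}) t c a := by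
  conv_lhs => rw [← cayH_univ_sdiff_zero_submatrix t (Equiv.swap b c)]
  rw [submatrix_apply, Equiv.swap_apply_left, Equiv.swap_apply_of_ne_of_ne hb.symm hc.symm]

theorem not_exhibitsPGFR_univ_sdiff_zero {a b c : G} (hab : a ≠ b) (hca : c ≠ a)
    (hcb : c ≠ b) : ¬ ExhibitsPGFR (Finset.univ \ {0}) a b := by
  rintro ⟨α, β, t, hβ, -, hlim⟩
  have hb := tendsto_pi_nhds.1 hlim b
  have hc := tendsto_pi_nhds.1 hlim c
  simp only [mulVec_single_one, col_apply, Pi.add_apply, Pi.smul_apply, smul_eq_mul,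
    Pi.single_eq_same, Pi.single_eq_of_ne hab.symm, Pi.single_eq_of_ne hca,
    Pi.single_eq_of_ne hcb, mul_zero, mul_one, zero_add, add_zero] at hb hc
  simp only [cayH_univ_sdiff_zero_apply_eq _ hab.symm hca] at hb
  exact hβ (tendsto_nhds_unique hb hc)

end CompleteGraph

theorem ZMod.sum_univ_two {M : Type*} [AddCommMonoid M] (f : ZMod 2 → M) :
    ∑ x, f x = f 0 + f 1 :=
  Fin.sum_univ_two f

theorem ZMod.forall_two {P : ZMod 2 → Prop} : (∀ x, P x) ↔ P 0 ∧ P 1 :=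
  Fin.forall_fin_two

theorem cayAdj_zmod_two_sq : cayAdj (Finset.univ \ {0} : Finset (ZMod 2)) ^ 2 = 1 := by
  ext x y
  simp only [sq, mul_apply, ZMod.sum_univ_two, cayAdj_univ_sdiff_zero_apply, one_apply]
  revert x y
  simp [ZMod.forall_two]

theorem cayH_zmod_two_pi_div_two :
    cayH (Finset.univ \ {0} : Finset (ZMod 2)) (Real.pi / 2)
      = (-Complex.I) • cayAdj (Finset.univ \ {0}) := by
  have hz : -(Complex.I * ((Real.pi / 2 : ℝ) : ℂ)) = -((Real.pi / 2 : ℂ) * Complex.I) := by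
    push_cast; ring
  rw [cayH, exp_smul_of_sq_eq_one cayAdj_zmod_two_sq, hz, Complex.cosh_neg, Complex.sinh_neg,
    Complex.cosh_mul_I, Complex.sinh_mul_I, ← Complex.ofReal_ofNat, ← Complex.ofReal_div,
    ← Complex.ofReal_cos, ← Complex.ofReal_sin, Real.cos_pi_div_two, Real.sin_pi_div_two]
  simp

theorem exhibitsPGFR_zmod_two : ExhibitsPGFR (Finset.univ \ {0} : Finset (ZMod 2)) 0 1 := by
  refine ⟨0, -Complex.I, fun _ => Real.pi / 2, neg_ne_zero.2 Complex.I_ne_zero, by simp, ?_⟩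
  have hstate : (cayH (Finset.univ \ {0}) (Real.pi / 2)).mulVec (Pi.single 0 1)
      = (0 : ℂ) • (Pi.single 0 1 : ZMod 2 → ℂ) + (-Complex.I) • Pi.single 1 1 := by
    ext x
    revert x
    simp [ZMod.forall_two, cayH_zmod_two_pi_div_two, cayAdj_univ_sdiff_zero_apply]
  exact hstate ▸ tendsto_const_nhds

theorem stmt_9 (n : ℕ) [NeZero n] (hn : 2 ≤ n) :
    (∃ a b : ZMod n, a ≠ b ∧
        ExhibitsPGFR ((Finset.univ : Finset (ZMod n)) \ {0}) a b) ↔ n = 2 := by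
  constructor
  · rintro ⟨a, b, hab, hPGFR⟩
    by_contra hn2
    have hcard : 3 ≤ ENat.card (ZMod n) := by
      rw [ENat.card_eq_coe_fintype_card, ZMod.card]
      exact_mod_cast (by omega : 3 ≤ n)
    obtain ⟨c, hca, hcb⟩ := ENat.exists_ne_ne_of_three_le hcard a b
    exact not_exhibitsPGFR_univ_sdiff_zero hab hca hcb hPGFR
  · rintro rfl
    exact ⟨0, 1, by decide, exhibitsPGFR_zmod_two⟩
end

section
/- Let p and q be distinct odd primes and let n be a positive integer divisible by 2pq. Then the complement of the n-cycle, C̄_n = Cay(ℤ_n, ℤ_n \ {0, 1, n−1}), does not exhibit PGFR between any pair of distinct vertices. -/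
open Matrix Filter

/-!
The characters `χ_r x = exp (2πi r x / n)` of `ℤ_n` are eigenvectors of every circulant graph,
and for `C̄_n` the eigenvalue of `χ_r`, `r ≠ 0`, is `λ_r = -(1 + χ r + χ (-r))`. Since the
transition matrix is symmetric, PGFR from `a` to `b = a + d` forces
`exp (-i t_k λ_r) → α + β χ (r d)` for every `r`; as `λ_1 = λ_{-1}`, this gives `χ d = -1`.
If `n = P m` with `m > 2` even, the eigenvalues along the progressions `1 + j m` and `2 + j m`
(`j < P`) both sum to `-P`, so the products of the phases agree, and in the limit
`(α - β) ^ P = (α + β) ^ P`. For `P = p` and `P = q` coprime this forces `α - β = α + β`,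
i.e. `β = 0`.
-/

theorem Matrix.exp_mulVec_of_mulVec_eq_smul {m 𝕂 : Type*} [Fintype m] [DecidableEq m]
    [RCLike 𝕂] {A : Matrix m m 𝕂} {v : m → 𝕂} {μ : 𝕂} (h : A *ᵥ v = μ • v) :
    NormedSpace.exp A *ᵥ v = NormedSpace.exp μ • v := by
  have hV : SemiconjBy (replicateCol m v) (diagonal fun _ => μ) A := by
    rw [SemiconjBy, ← replicateCol_mulVec, h]
    ext i j
    simp [mul_diagonal, replicateCol_apply, mul_comm]
  have hexp : replicateCol m v * NormedSpace.exp (diagonal fun _ => μ) =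
      NormedSpace.exp A * replicateCol m v :=
    open scoped Norms.Operator in hV.exp_right
  ext i
  have := congrFun (congrFun hexp i) i
  rw [exp_diagonal, mul_diagonal, ← replicateCol_mulVec] at this
  simpa [replicateCol_apply, mul_comm] using this.symm

theorem AddChar.sum_range_map_add_nsmul_eq_zero {A R : Type*} [AddMonoid A] [CommRing R]
    [IsDomain R] (ψ : AddChar A R) (x : A) {g : A} {P : ℕ} (hg : P • g = 0)
    (hψ : ψ g ≠ 1) :
    ∑ j ∈ Finset.range P, ψ (x + j • g) = 0 := by
  have hgeom : (∑ j ∈ Finset.range P, ψ g ^ j) * (ψ g - 1) = 0 := by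
    rw [geom_sum_mul, ← AddChar.map_nsmul_eq_pow, hg, AddChar.map_zero_eq_one, sub_self]
  simp_rw [AddChar.map_add_eq_mul, AddChar.map_nsmul_eq_pow, ← Finset.mul_sum,
    (mul_eq_zero.mp hgeom).resolve_right (sub_ne_zero.mpr hψ), mul_zero]

theorem eq_of_pow_eq_pow_of_coprime {K : Type*} [CommGroupWithZero K] {x y : K} {p q : ℕ}
    (hpq : p.Coprime q) (hp : x ^ p = y ^ p) (hq : x ^ q = y ^ q) : x = y := by
  by_cases hy : y = 0
  · subst hy
    obtain h | h : p ≠ 0 ∨ q ≠ 0 := by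
      by_contra! h
      simp [h.1, h.2] at hpq
    · exact pow_eq_zero_iff h |>.mp (hp.trans (zero_pow h))
    · exact pow_eq_zero_iff h |>.mp (hq.trans (zero_pow h))
  · have h1 : (x / y) ^ p = 1 := by rw [div_pow, hp, div_self (pow_ne_zero _ hy)]
    have h2 : (x / y) ^ q = 1 := by rw [div_pow, hq, div_self (pow_ne_zero _ hy)]
    exact (div_eq_one_iff_eq hy).mp ((pow_eq_one_iff_of_coprime hpq).mp ⟨h1, h2⟩)

section CayleyGraph

open Complex

variable {G : Type*} [AddCommGroup G] [Fintype G] [DecidableEq G] {S : Finset G}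

noncomputable def cayEig (S : Finset G) (ψ : AddChar G ℂ) : ℂ := ∑ s ∈ S, ψ (-s)

theorem cayAdj_mulVec_addChar (ψ : AddChar G ℂ) : cayAdj S *ᵥ ψ = cayEig S ψ • ⇑ψ := by
  ext x
  have hshift : (cayAdj S *ᵥ ψ) x = ∑ s ∈ S, ψ (x - s) := by
    rw [← Finset.univ_inter S, ← Finset.sum_ite_mem]
    exact Fintype.sum_equiv (Equiv.subLeft x) _ _ (fun y => by simp [cayAdj])
  simp [hshift, cayEig, sub_eq_add_neg, AddChar.map_add_eq_mul, Finset.mul_sum, mul_comm]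

theorem cayH_mulVec_addChar (ψ : AddChar G ℂ) (t : ℝ) :
    cayH S t *ᵥ ψ = exp (-(I * t) * cayEig S ψ) • ⇑ψ := by
  rw [cayH, Complex.exp_eq_exp_ℂ]
  exact Matrix.exp_mulVec_of_mulVec_eq_smul <| by
    rw [smul_mulVec, cayAdj_mulVec_addChar, smul_smul]

theorem cayAdj_transpose (hS : ∀ s ∈ S, -s ∈ S) : (cayAdj S)ᵀ = cayAdj S := by
  have hmem : ∀ x y : G, y - x ∈ S ↔ x - y ∈ S := fun x y =>
    ⟨fun h => by simpa using hS _ h, fun h => by simpa using hS _ h⟩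
  ext x y
  simp [cayAdj, hmem]

theorem cayH_transpose (hS : ∀ s ∈ S, -s ∈ S) (t : ℝ) : (cayH S t)ᵀ = cayH S t := by
  rw [cayH, ← exp_transpose, transpose_smul, cayAdj_transpose hS]

theorem cayH_mulVec_single_dotProduct_addChar (hS : ∀ s ∈ S, -s ∈ S) (ψ : AddChar G ℂ)
    (t : ℝ) (a : G) :
    (cayH S t *ᵥ Pi.single a 1) ⬝ᵥ ψ = exp (-(I * t) * cayEig S ψ) * ψ a := by
  rw [dotProduct_comm, dotProduct_mulVec, ← mulVec_transpose, cayH_transpose hS,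
    cayH_mulVec_addChar, dotProduct_single, mul_one, Pi.smul_apply, smul_eq_mul]

theorem tendsto_exp_cayEig (hS : ∀ s ∈ S, -s ∈ S) {a b : G} {α β : ℂ} {t : ℕ → ℝ}
    (ht : Tendsto (fun k => cayH S (t k) *ᵥ Pi.single a 1) atTop
      (nhds (α • Pi.single a 1 + β • Pi.single b 1))) (ψ : AddChar G ℂ) :
    Tendsto (fun k => exp (-(I * t k) * cayEig S ψ)) atTop (nhds (α + β * ψ (b - a))) := by
  have hinv : ψ a * ψ (-a) = 1 := by
    rw [← AddChar.map_add_eq_mul, add_neg_cancel, AddChar.map_zero_eq_one]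
  have h : Tendsto (fun k => (cayH S (t k) *ᵥ Pi.single a 1) ⬝ᵥ ψ * ψ (-a)) atTop
      (nhds ((α • Pi.single a 1 + β • Pi.single b 1) ⬝ᵥ ψ * ψ (-a))) :=
    (((continuous_id.dotProduct continuous_const).tendsto _).comp ht).mul_const _
  simp_rw [cayH_mulVec_single_dotProduct_addChar hS, mul_assoc, hinv, mul_one] at h
  convert h using 2
  simp [add_mul, mul_assoc, hinv, sub_eq_add_neg, AddChar.map_add_eq_mul]

theorem cayEig_univ_sdiff {ψ : AddChar G ℂ} (hψ : ψ ≠ 1) (T : Finset G) :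
    cayEig (Finset.univ \ T) ψ = -∑ s ∈ T, ψ (-s) := by
  have hsum : ∑ s, ψ (-s) = 0 := by
    rw [← AddChar.sum_eq_zero_of_ne_one hψ]
    exact Fintype.sum_equiv (Equiv.neg G) _ _ (fun _ => rfl)
  rw [cayEig, Finset.sum_sdiff_eq_sub (Finset.subset_univ T), hsum, zero_sub]

end CayleyGraph

section CycleComplement

open Complex ZMod

abbrev cycleComplement (n : ℕ) [NeZero n] : Finset (ZMod n) := Finset.univ \ {0, 1, -1}

variable {n : ℕ} [NeZero n]

theorem neg_mem_cycleComplement : ∀ s ∈ cycleComplement n, -s ∈ cycleComplement n := by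
  intro s
  simp [neg_eq_iff_eq_neg, or_comm]

theorem cayEig_cycleComplement (hn : 2 < n) {r : ZMod n} (hr : r ≠ 0) :
    cayEig (cycleComplement n) (stdAddChar.mulShift r) =
      -(1 + stdAddChar r + stdAddChar (-r)) := by
  have : Fact (2 < n) := ⟨hn⟩
  have : Fact (1 < n) := ⟨by omega⟩
  rw [cayEig_univ_sdiff (isPrimitive_stdAddChar n hr), Finset.sum_insert (by simp),
    Finset.sum_pair neg_one_ne_one.symm]
  simp only [AddChar.mulShift_apply, neg_zero, AddChar.map_zero_eq_one, mul_neg, mul_one,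
    neg_neg]
  ring

theorem sum_cayEig_cycleComplement {P m c : ℕ} (hPm : P * m = n) (hP : 1 < P) (hc : 0 < c)
    (hcm : c < m) :
    ∑ j ∈ Finset.range P,
      cayEig (cycleComplement n) (stdAddChar.mulShift (c + j • m : ZMod n)) = -P := by
  have hm : (m : ZMod n) ≠ 0 := by
    rw [Ne, ZMod.natCast_eq_zero_iff]
    exact Nat.not_dvd_of_pos_of_lt (by omega) (by nlinarith)
  have hPm' : P • (m : ZMod n) = 0 := by
    rw [nsmul_eq_mul, ← Nat.cast_mul, hPm, ZMod.natCast_self]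
  have hr : ∀ j : ℕ, (c + j • m : ZMod n) ≠ 0 := by
    intro j h
    rw [nsmul_eq_mul, ← Nat.cast_mul, ← Nat.cast_add, ZMod.natCast_eq_zero_iff] at h
    have := (Nat.dvd_add_left (dvd_mul_left m j)).mp ((Dvd.intro_left P hPm).trans h)
    exact absurd (Nat.le_of_dvd hc this) (by omega)
  have hn : 2 < n := by nlinarith
  have hχm : stdAddChar (m : ZMod n) ≠ 1 := by
    rwa [Ne, (isPrimitive_stdAddChar n).zmod_char_eq_one_iff]
  have hχm' : stdAddChar (-m : ZMod n) ≠ 1 := by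
    rwa [Ne, (isPrimitive_stdAddChar n).zmod_char_eq_one_iff, neg_eq_zero]
  rw [Finset.sum_congr rfl fun j _ => cayEig_cycleComplement hn (hr j)]
  simp_rw [neg_add, Finset.sum_add_distrib, Finset.sum_neg_distrib, ← neg_nsmul]
  rw [AddChar.sum_range_map_add_nsmul_eq_zero _ _ hPm' hχm,
    AddChar.sum_range_map_add_nsmul_eq_zero _ _ (by rw [smul_neg, hPm', neg_zero]) hχm']
  simp

variable {α β : ℂ} {t : ℕ → ℝ} {d : ZMod n}

theorem stdAddChar_eq_neg_one_of_tendsto (hn : 2 < n) (hd : d ≠ 0) (hβ : β ≠ 0)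
    (hlim : ∀ r : ZMod n, Tendsto (fun k => exp (-(I * t k) *
      cayEig (cycleComplement n) (stdAddChar.mulShift r))) atTop
      (nhds (α + β * stdAddChar (r * d)))) :
    stdAddChar d = -1 := by
  have : Fact (1 < n) := ⟨by omega⟩
  have heig : cayEig (cycleComplement n) (stdAddChar.mulShift (-1)) =
      cayEig (cycleComplement n) (stdAddChar.mulShift 1) := by
    rw [cayEig_cycleComplement hn one_ne_zero,
      cayEig_cycleComplement hn (neg_ne_zero.2 one_ne_zero), neg_neg]
    ring
  have hsymm : stdAddChar d = stdAddChar (-d) := by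
    have h := tendsto_nhds_unique (hlim 1) (heig ▸ hlim (-1))
    rwa [one_mul, neg_one_mul, add_right_inj, mul_right_inj' hβ] at h
  have hsq : stdAddChar d * stdAddChar d = 1 := by
    nth_rewrite 2 [hsymm]
    rw [← AddChar.map_add_eq_mul, add_neg_cancel, AddChar.map_zero_eq_one]
  exact (mul_self_eq_one_iff.mp hsq).resolve_left
    (by rwa [(isPrimitive_stdAddChar n).zmod_char_eq_one_iff])

theorem pow_sub_eq_pow_add_of_tendsto (hd : d ≠ 0) (hβ : β ≠ 0)
    (hlim : ∀ r : ZMod n, Tendsto (fun k => exp (-(I * t k) *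
      cayEig (cycleComplement n) (stdAddChar.mulShift r))) atTop
      (nhds (α + β * stdAddChar (r * d))))
    {P m : ℕ} (hPm : P * m = n) (hP : 1 < P) (hm : 2 < m) (hm2 : Even m) :
    (α - β) ^ P = (α + β) ^ P := by
  have hd' := stdAddChar_eq_neg_one_of_tendsto (by nlinarith) hd hβ hlim
  have hval : ∀ c j : ℕ, stdAddChar ((c + j • m : ZMod n) * d) = (-1) ^ c := fun c j => by
    rw [show (c + j • m : ZMod n) * d = (c + j * m) • d by
        simp only [nsmul_eq_mul]; push_cast; ring,
      AddChar.map_nsmul_eq_pow, hd', pow_add, (hm2.mul_left j).neg_one_pow, mul_one]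
  have key : ∀ c : ℕ, 0 < c → c < m →
      Tendsto (fun k => exp (-(I * t k) * -P)) atTop (nhds ((α + β * (-1) ^ c) ^ P)) := by
    intro c hc hcm
    have h := tendsto_finsetProd (Finset.range P) fun j _ => hlim (c + j • m)
    simp_rw [← Complex.exp_sum, ← Finset.mul_sum, sum_cayEig_cycleComplement hPm hP hc hcm,
      hval, Finset.prod_const, Finset.card_range] at h
    exact h
  simpa [sub_eq_add_neg] using tendsto_nhds_unique (key 1 one_pos (by omega)) (key 2 two_pos hm)

end CycleComplement

theorem stmt_12_general (p q n : ℕ) [NeZero n] (hp : p.Prime) (hq : q.Prime)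
    (hpq : p ≠ q) (hn : 2 * p * q ∣ n) :
    ∀ a b : ZMod n, a ≠ b →
      ¬ ExhibitsPGFR ((Finset.univ : Finset (ZMod n)) \ {0, 1, -1}) a b := by
  rintro a b hab ⟨α, β, t, hβ, -, ht⟩
  have hlim := tendsto_exp_cayEig neg_mem_cycleComplement ht
  obtain ⟨c, rfl⟩ := hn
  have hc : 0 < c := Nat.pos_of_ne_zero (right_ne_zero_of_mul (NeZero.ne (2 * p * q * c)))
  have hpow : ∀ {P m : ℕ}, P * m = 2 * p * q * c → 1 < P → 2 < m → Even m →
      (α - β) ^ P = (α + β) ^ P := fun hPm =>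
    pow_sub_eq_pow_add_of_tendsto (sub_ne_zero.2 hab.symm) hβ (fun r => hlim _) hPm
  have hp' := hpow (m := 2 * q * c) (by ring) hp.one_lt (by nlinarith [hq.two_le])
    ((even_two_mul q).mul_right c)
  have hq' := hpow (m := 2 * p * c) (by ring) hq.one_lt (by nlinarith [hp.two_le])
    ((even_two_mul p).mul_right c)
  have := eq_of_pow_eq_pow_of_coprime ((Nat.coprime_primes hp hq).2 hpq) hp' hq'
  exact hβ (by linear_combination -this / 2)

theorem stmt_12 (p q n : ℕ) [NeZero n] (hp : p.Prime) (hq : q.Prime)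
    (hpodd : Odd p) (hqodd : Odd q) (hpq : p ≠ q) (hn : 2 * p * q ∣ n) :
    ∀ a b : ZMod n, a ≠ b →
      ¬ ExhibitsPGFR ((Finset.univ : Finset (ZMod n)) \ {0, 1, -1}) a b :=
  stmt_12_general p q n hp hq hpq hn
end

section
/- Let p be an odd prime, let h ≥ 3 and s ≥ 1 be integers, and set n = 2^h·p^s. Then the complement of the n-cycle, C̄_n = Cay(ℤ_n, ℤ_n \ {0, 1, n−1}), does not exhibit PGFR between any pair of distinct vertices. -/
open Matrix Filter

/-!
The characters `χ_r(x) = ω ^ (r x)` of `ℤ_n`, with `ω` a primitive `n`-th root of unity, are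
common left eigenvectors of all transition matrices, with eigenvalues `exp (-i t λ_r)`, where
`λ_r = -1 - ω ^ r - ω ^ (-r)` whenever `n ∤ r`. Pairing `χ_r` with PGFR from `a` to `b` gives
`exp (-i t_k λ_r) → α + β ζ ^ r` with `ζ = χ_1 (b - a)`, so additive relations between the `λ_r`
become multiplicative relations between these limits, all of which lie on the unit circle.
If `8 ∣ n` and `m ∈ {2, p}` divides `n`, the eigenvalues along `1 + (n / m) ℕ` sum to
`-m = m λ_(n/4)`, whence `∏_{j<m} (α + β ζ ^ (1 + j n / m)) = (α + β ζ ^ (n / 4)) ^ m`.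
The unit-circle constraints (or, when `α = 0`, the relation for `m = 2`) force `ζ = -1`, and
then the two relations read `(α - β) ^ 2 = (α + β) ^ 2` and `(α - β) ^ p = (α + β) ^ p`,
so `β = 0` as `p` is odd.
-/

open Complex ComplexConjugate Finset

theorem AddChar.conj_sum_of_neg_mem {G : Type*} [AddCommGroup G] [Finite G] {S : Finset G}
    (hS : ∀ z ∈ S, -z ∈ S) (ψ : AddChar G ℂ) : conj (∑ z ∈ S, ψ z) = ∑ z ∈ S, ψ z := by
  simp_rw [map_sum, ← AddChar.map_neg_eq_conj]
  exact sum_nbij' (- ·) (- ·) hS hS (by simp) (by simp) (by simp)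

theorem AddChar.sum_compl_eq_neg {G R : Type*} [AddGroup G] [Fintype G] [DecidableEq G]
    [CommRing R] [IsDomain R] {ψ : AddChar G R} (hψ : ψ ≠ 1) (T : Finset G) :
    ∑ z ∈ univ \ T, ψ z = -∑ z ∈ T, ψ z := by
  rw [sum_sdiff_eq_sub (subset_univ T), AddChar.sum_eq_zero_of_ne_one hψ, zero_sub]

theorem AddChar.sum_compl_zero_self_neg {G K : Type*} [AddGroup G] [Fintype G]
    [DecidableEq G] [Field K] {ψ : AddChar G K} (hψ : ψ ≠ 1) {x : G} (hx : -x ≠ x) :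
    ∑ z ∈ univ \ {0, x, -x}, ψ z = -(1 + ψ x + (ψ x)⁻¹) := by
  have hx0 : x ≠ 0 := by rintro rfl; exact hx neg_zero
  rw [AddChar.sum_compl_eq_neg hψ, sum_insert (by simp [hx0, hx0.symm]),
    sum_insert (by simpa using hx.symm), sum_singleton, AddChar.map_zero_eq_one,
    AddChar.map_neg_eq_inv, add_assoc]

theorem neg_mem_univ_sdiff_zero_self_neg {G : Type*} [AddGroup G] [Fintype G]
    [DecidableEq G] {x z : G} (hz : z ∈ univ \ {0, x, -x}) : -z ∈ univ \ {0, x, -x} := by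
  simp only [Finset.mem_sdiff, mem_univ, mem_insert, mem_singleton, true_and,
    neg_eq_iff_eq_neg, neg_zero, neg_neg] at hz ⊢
  tauto

theorem Matrix.vecMul_exp_of_vecMul_eq_smul_s15 {m : Type*} [Fintype m] [DecidableEq m]
    {M : Matrix m m ℂ} {v : m → ℂ} {μ : ℂ}
    (hv : v ᵥ* M = μ • v) : v ᵥ* NormedSpace.exp M = exp μ • v := by
  let _ : NormedRing (Matrix m m ℂ) := Matrix.linftyOpNormedRing
  let _ : NormedAlgebra ℂ (Matrix m m ℂ) := Matrix.linftyOpNormedAlgebra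
  have hpow : ∀ k : ℕ, v ᵥ* M ^ k = μ ^ k • v := by
    intro k
    induction k with
    | zero => simp
    | succ k ih => rw [pow_succ, ← vecMul_vecMul, ih, smul_vecMul, hv, smul_smul, pow_succ]
  let L := LinearMap.toContinuousLinearMap (vecMulBilin ℂ ℂ v : Matrix m m ℂ →ₗ[ℂ] m → ℂ)
  refine (L.hasSum (NormedSpace.exp_series_hasSum_exp' (𝕂 := ℂ) M)).unique ?_
  simp only [L, LinearMap.coe_toContinuousLinearMap', vecMulBilin_apply, vecMul_smul, hpow,
    smul_smul, exp_eq_exp_ℂ]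
  exact (NormedSpace.exp_series_hasSum_exp' (𝕂 := ℂ) μ).smul_const v

section Cayley

variable {G : Type*} [AddCommGroup G] [Fintype G] [DecidableEq G]

theorem vecMul_cayAdj (S : Finset G) (ψ : AddChar G ℂ) :
    ⇑ψ ᵥ* cayAdj S = (∑ z ∈ S, ψ z) • ⇑ψ := by
  funext y
  calc ∑ x, ψ x * (if x - y ∈ S then 1 else 0) = ∑ z, ψ (z + y) * (if z ∈ S then 1 else 0) :=
        (Fintype.sum_equiv (Equiv.addRight y) _ _ fun z => by simp).symm
    _ = (∑ z ∈ S, ψ z) * ψ y := by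
        simp [AddChar.map_add_eq_mul, sum_mul]

theorem vecMul_cayH (S : Finset G) (ψ : AddChar G ℂ) (t : ℝ) :
    ⇑ψ ᵥ* cayH S t = exp (-(I * t) * ∑ z ∈ S, ψ z) • ⇑ψ :=
  vecMul_exp_of_vecMul_eq_smul_s15 (by rw [vecMul_smul, vecMul_cayAdj, smul_smul])

theorem tendsto_exp_of_tendsto_cayH_mulVec {S : Finset G} {a b : G} {α β : ℂ} {t : ℕ → ℝ}
    (h : Tendsto (fun k => cayH S (t k) *ᵥ Pi.single a 1) atTop
      (nhds (α • Pi.single a 1 + β • Pi.single b 1))) (ψ : AddChar G ℂ) :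
    Tendsto (fun k => exp (-(I * t k) * ∑ z ∈ S, ψ z)) atTop
      (nhds (α + β * ψ (b - a))) := by
  have hcont : Continuous fun v : G → ℂ => ψ (-a) * (⇑ψ ⬝ᵥ v) := by fun_prop
  convert (hcont.tendsto _).comp h using 1
  · ext k
    rw [Function.comp_apply, dotProduct_mulVec, vecMul_cayH, smul_dotProduct, dotProduct_single,
      smul_eq_mul, mul_one, mul_left_comm, ← AddChar.map_add_eq_mul, neg_add_cancel,
      AddChar.map_zero_eq_one, mul_one]
  · simp [mul_add, mul_left_comm, ← AddChar.map_add_eq_mul, sub_eq_neg_add]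

theorem norm_add_mul_eq_one_of_tendsto_cayH_mulVec {S : Finset G} (hS : ∀ z ∈ S, -z ∈ S)
    {a b : G} {α β : ℂ} {t : ℕ → ℝ}
    (h : Tendsto (fun k => cayH S (t k) *ᵥ Pi.single a 1) atTop
      (nhds (α • Pi.single a 1 + β • Pi.single b 1))) (ψ : AddChar G ℂ) :
    ‖α + β * ψ (b - a)‖ = 1 := by
  have him : (∑ z ∈ S, ψ z).im = 0 := conj_eq_iff_im.mp (AddChar.conj_sum_of_neg_mem hS ψ)
  refine tendsto_nhds_unique (tendsto_exp_of_tendsto_cayH_mulVec h ψ).norm ?_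
  simp [norm_exp, him]

end Cayley

theorem sum_range_pow_add_inv_pow_eq_zero {K : Type*} [Field K] {ω : K} {g m : ℕ}
    (hg : IsPrimitiveRoot (ω ^ g) m) (hm : 1 < m) :
    ∑ j ∈ range m, (ω ^ (1 + j * g) + (ω ^ (1 + j * g))⁻¹) = 0 := by
  have h : ∀ j, ω ^ (1 + j * g) = ω * (ω ^ g) ^ j := fun j => by
    rw [pow_add, pow_one, mul_comm j, pow_mul]
  simp_rw [h, mul_inv, ← inv_pow]
  have hg' : IsPrimitiveRoot (ω⁻¹ ^ g) m := by rw [inv_pow]; exact hg.inv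
  rw [sum_add_distrib, ← mul_sum, ← mul_sum, hg.geom_sum_eq_zero hm, hg'.geom_sum_eq_zero hm,
    mul_zero, mul_zero, add_zero]

section ComplCycle

variable {n : ℕ} [NeZero n]

theorem isPrimitiveRoot_stdAddChar_one : IsPrimitiveRoot (ZMod.stdAddChar (1 : ZMod n)) n := by
  have h : ZMod.stdAddChar (1 : ZMod n) = exp (2 * Real.pi * I / n) := by
    simpa using ZMod.stdAddChar_coe (N := n) 1
  rw [h]
  exact Complex.isPrimitiveRoot_exp n (NeZero.ne n)

theorem circEig_eq_sum_pow_stdAddChar (S : Finset (ZMod n)) (r : ℕ) :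
    circEig n S r = ∑ y ∈ S, (ZMod.stdAddChar ^ r) y := by
  refine sum_congr rfl fun y _ => ?_
  rw [AddChar.pow_apply, ZMod.stdAddChar_apply, ZMod.toCircle_apply, ← exp_nat_mul]
  ring_nf

theorem circEig_compl_cycle {r : ℕ} (hn : 2 < n) (hr : ¬ n ∣ r) :
    circEig n (univ \ {0, 1, -1}) r =
      -(1 + ZMod.stdAddChar (1 : ZMod n) ^ r + (ZMod.stdAddChar (1 : ZMod n) ^ r)⁻¹) := by
  have : Fact (2 < n) := ⟨hn⟩
  have hψ : (ZMod.stdAddChar ^ r : AddChar (ZMod n) ℂ) ≠ 1 := fun h => hr <|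
    (isPrimitiveRoot_stdAddChar_one.pow_eq_one_iff_dvd r).mp (by simpa using congr($h 1))
  rw [circEig_eq_sum_pow_stdAddChar, AddChar.sum_compl_zero_self_neg hψ ZMod.neg_one_ne_one,
    AddChar.pow_apply]

theorem circEig_compl_cycle_quarter {q : ℕ} (hq : n = 4 * q) :
    circEig n (univ \ {0, 1, -1}) q = -1 := by
  have hq0 : 0 < q := by have := NeZero.ne n; omega
  have hω := isPrimitiveRoot_stdAddChar_one (n := n)
  have hsq : (ZMod.stdAddChar (1 : ZMod n) ^ q) ^ 2 = -1 := by
    rw [← pow_mul]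
    exact (hω.pow (by omega) (by rw [hq]; ring)).eq_neg_one_of_two_right
  have hinv : (ZMod.stdAddChar (1 : ZMod n) ^ q)⁻¹ = -ZMod.stdAddChar (1 : ZMod n) ^ q :=
    inv_eq_of_mul_eq_one_right (by linear_combination -hsq)
  rw [circEig_compl_cycle (by omega) (Nat.not_dvd_of_pos_of_lt hq0 (by omega)), hinv]
  ring

theorem sum_circEig_compl_cycle_progression {g m : ℕ} (hgm : g * m = n) (hg : 2 ≤ g)
    (hm : 1 < m) : ∑ j ∈ range m, circEig n (univ \ {0, 1, -1}) (1 + j * g) = -m := by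
  have hω := isPrimitiveRoot_stdAddChar_one (n := n)
  have hlt : ∀ j ∈ range m, 1 + j * g < n := fun j hj => by
    have := mem_range.mp hj
    nlinarith
  rw [sum_congr rfl fun j hj => circEig_compl_cycle (by nlinarith)
    (Nat.not_dvd_of_pos_of_lt (by omega) (hlt j hj))]
  have := sum_range_pow_add_inv_pow_eq_zero (hω.pow (NeZero.pos n) hgm.symm) hm
  simp_rw [add_assoc]
  rw [sum_neg_distrib, sum_add_distrib, this]
  simp

end ComplCycle

theorem prod_eq_pow_of_tendsto_exp {ι : Type*} {s : Finset ι} {c : ℕ → ℂ} {x z : ι → ℂ}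
    {y w : ℂ} (hx : ∀ j ∈ s, Tendsto (fun k => exp (c k * x j)) atTop (nhds (z j)))
    (hy : Tendsto (fun k => exp (c k * y)) atTop (nhds w)) (h : ∑ j ∈ s, x j = #s * y) :
    ∏ j ∈ s, z j = w ^ #s := by
  refine tendsto_nhds_unique ((tendsto_finsetProd _ hx).congr fun k => ?_) (hy.pow _)
  rw [← exp_sum, ← mul_sum, h, ← exp_nat_mul]
  ring_nf

theorem eq_of_sq_eq_sq_of_pow_eq_pow {M : Type*} [CommMonoidWithZero M] [IsCancelMulZero M]
    {a b : M} {p : ℕ} (hp : Odd p) (h2 : a ^ 2 = b ^ 2) (hpow : a ^ p = b ^ p) : a = b := by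
  obtain ⟨m, rfl⟩ := hp
  rcases eq_or_ne b 0 with rfl | hb
  · simpa using h2
  refine mul_left_cancel₀ (pow_ne_zero m (pow_ne_zero 2 hb)) ?_
  calc (b ^ 2) ^ m * a = (a ^ 2) ^ m * a := by rw [h2]
    _ = a ^ (2 * m + 1) := by rw [pow_succ a (2 * m), pow_mul]
    _ = b ^ (2 * m + 1) := hpow
    _ = (b ^ 2) ^ m * b := by rw [pow_succ b (2 * m), pow_mul]

theorem re_mul_conj_eq_zero_of_norm_add_eq_one {α γ : ℂ} (hnorm : ‖α‖ ^ 2 + ‖γ‖ ^ 2 = 1)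
    (h : ‖α + γ‖ = 1) : (α * conj γ).re = 0 := by
  have := normSq_add α γ
  simp only [normSq_eq_norm_sq, h, hnorm] at this
  linarith

theorem eq_neg_one_of_norm_add_mul_eq_one {α β ζ : ℂ} (hα : α ≠ 0) (hβ : β ≠ 0)
    (hnorm : ‖α‖ ^ 2 + ‖β‖ ^ 2 = 1) (hζ : ‖ζ‖ = 1) (hζ1 : ζ ≠ 1) (h0 : ‖α + β‖ = 1)
    (h1 : ‖α + β * ζ‖ = 1) : ζ = -1 := by
  have hu0 := re_mul_conj_eq_zero_of_norm_add_eq_one hnorm h0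
  have hu1 := re_mul_conj_eq_zero_of_norm_add_eq_one (by rwa [norm_mul, hζ, mul_one]) h1
  set u := α * conj β
  have hu : u.im ≠ 0 := fun him => mul_ne_zero hα ((map_ne_zero _).mpr hβ) (ext hu0 him)
  have hζim : ζ.im = 0 := by
    rw [map_mul, ← mul_assoc, mul_re, conj_re, conj_im, hu0] at hu1
    exact (mul_eq_zero.mp (by linarith : u.im * ζ.im = 0)).resolve_left hu
  have hζre : ζ.re * ζ.re = 1 := by
    have := normSq_eq_norm_sq ζ
    rw [hζ, normSq_apply, hζim] at this
    linarith
  have hζreal : ζ = (ζ.re : ℂ) := ext rfl (by simpa using hζim)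
  rcases mul_self_eq_one_iff.mp hζre with h | h
  · exact absurd (by rw [hζreal, h, ofReal_one]) hζ1
  · rw [hζreal, h, ofReal_neg, ofReal_one]

theorem eq_zero_of_limit_relations {α β ζ : ℂ} {c e p : ℕ} (hnorm : ‖α‖ ^ 2 + ‖β‖ ^ 2 = 1)
    (hζ : ‖ζ‖ = 1) (hζ1 : ζ ≠ 1) (habs : ∀ r : ℕ, ‖α + β * ζ ^ r‖ = 1) (he : Even e)
    (hp : Odd p)
    (h2 : (α + β * ζ) * (α + β * ζ ^ (1 + 4 * c)) = (α + β * ζ ^ (2 * c)) ^ 2)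
    (hpe : ∏ j ∈ range p, (α + β * ζ ^ (1 + j * e)) = (α + β * ζ ^ (2 * c)) ^ p) : β = 0 := by
  by_contra hβ
  have hζ' : ζ = -1 := by
    rcases eq_or_ne α 0 with rfl | hα
    · have hζ0 : ζ ≠ 0 := norm_ne_zero_iff.mp (hζ ▸ one_ne_zero)
      refine (mul_self_eq_one_iff.mp ?_).resolve_left hζ1
      refine mul_left_cancel₀ (mul_ne_zero (pow_ne_zero 2 hβ) (pow_ne_zero (4 * c) hζ0)) ?_
      linear_combination h2
    · exact eq_neg_one_of_norm_add_mul_eq_one hα hβ hnorm hζ hζ1 (by simpa using habs 0)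
        (by simpa using habs 1)
  have hodd : ∀ k, Odd k → α + β * ζ ^ k = α - β := fun k hk => by
    rw [hζ', hk.neg_one_pow]; ring
  have heven : α + β * ζ ^ (2 * c) = α + β := by
    rw [hζ', (even_two_mul c).neg_one_pow]; ring
  have h1 := hodd 1 odd_one
  rw [pow_one] at h1
  rw [h1, hodd _ ⟨2 * c, by ring⟩, heven] at h2
  rw [prod_congr rfl fun j _ => hodd _ (he.mul_left j).one_add, prod_const, card_range,
    heven] at hpe
  have := eq_of_sq_eq_sq_of_pow_eq_pow hp (by linear_combination h2) hpe
  exact hβ (by linear_combination -this / 2)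

theorem not_exhibitsPGFR_compl_cycle {n p : ℕ} [NeZero n] (h8 : 8 ∣ n) (hp : 1 < p)
    (hpodd : Odd p) (hpn : p ∣ n) {a b : ZMod n} (hab : a ≠ b) :
    ¬ ExhibitsPGFR (univ \ {0, 1, -1}) a b := by
  rintro ⟨α, β, t, hβ, hnorm, htend⟩
  obtain ⟨c, hc⟩ := h8
  obtain ⟨e, he⟩ := hpn
  have hc0 : 0 < c := by have := NeZero.ne n; omega
  set ζ : ℂ := ZMod.stdAddChar (b - a)
  have hlim : ∀ r : ℕ, Tendsto (fun k => exp (-(I * t k) * circEig n (univ \ {0, 1, -1}) r))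
      atTop (nhds (α + β * ζ ^ r)) := fun r => by
    have := tendsto_exp_of_tendsto_cayH_mulVec htend (ZMod.stdAddChar ^ r)
    rwa [AddChar.pow_apply, ← circEig_eq_sum_pow_stdAddChar] at this
  have hrel : ∀ g m, g * m = n → 2 ≤ g → 1 < m →
      ∏ j ∈ range m, (α + β * ζ ^ (1 + j * g)) = (α + β * ζ ^ (2 * c)) ^ m :=
    fun g m hgm hg hm => by
      have := prod_eq_pow_of_tendsto_exp (fun j _ => hlim _) (hlim (2 * c))
        (by rw [card_range, sum_circEig_compl_cycle_progression hgm hg hm,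
          circEig_compl_cycle_quarter (by omega)]; ring)
      rwa [card_range] at this
  have he2 : Even e := even_iff_two_dvd.mpr <| (Nat.coprime_two_left.mpr hpodd).dvd_of_dvd_mul_left
    (he ▸ hc ▸ dvd_mul_of_dvd_left (by norm_num) c)
  have hζ1 : ζ ≠ 1 := fun h => hab (sub_eq_zero.mp (ZMod.injective_stdAddChar
    (h.trans (AddChar.map_zero_eq_one _).symm))).symm
  have habs : ∀ r : ℕ, ‖α + β * ζ ^ r‖ = 1 := fun r => by
    have := norm_add_mul_eq_one_of_tendsto_cayH_mulVec
      (fun _ => neg_mem_univ_sdiff_zero_self_neg) htend (ZMod.stdAddChar ^ r)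
    rwa [AddChar.pow_apply] at this
  have h2 : (α + β * ζ) * (α + β * ζ ^ (1 + 4 * c)) = (α + β * ζ ^ (2 * c)) ^ 2 := by
    simpa [prod_range_succ] using hrel (4 * c) 2 (by omega) (by omega) one_lt_two
  have he0 : e ≠ 0 := by rintro rfl; exact NeZero.ne n (by simpa using he)
  have hpe := hrel e p (by rw [he, mul_comm]) (by obtain ⟨k, rfl⟩ := he2; omega) hp
  exact hβ (eq_zero_of_limit_relations hnorm (AddChar.norm_apply _ _) hζ1 habs he2 hpodd h2 hpe)

theorem stmt_15 (p s h n : ℕ) [NeZero n] (hp : p.Prime) (hpodd : Odd p)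
    (hh : 3 ≤ h) (hs : 1 ≤ s) (hn : n = 2 ^ h * p ^ s) :
    ∀ a b : ZMod n, a ≠ b →
      ¬ ExhibitsPGFR ((Finset.univ : Finset (ZMod n)) \ {0, 1, -1}) a b := by
  intro a b hab
  refine not_exhibitsPGFR_compl_cycle ?_ hp.one_lt hpodd ?_ hab
  · rw [hn]
    exact dvd_mul_of_dvd_left (pow_dvd_pow 2 hh) _
  · rw [hn]
    exact dvd_mul_of_dvd_right (dvd_pow_self p (by omega)) _
end

section
/- Let p be an odd prime and let s ≥ 2 be an integer, and let G = ℤ_2 × (ℤ_p)^s. Let S = {(1, 0, …, 0)} ∪ {(0, j, 0, …, 0) : j = 1, …, p−1} ⊆ G, where (0, j, 0, …, 0) has j in the first of the s copies of ℤ_p and 0 elsewhere. Then for all a, b ∈ G with b − a = (1, 0, …, 0), the complement of Cay(G, S), namely Cay(G, G \ (S ∪ {0})), exhibits FR between a and b. -/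
open Matrix Filter

/-! The adjacency matrix of the complement is `J - P - C`, where `J` is the all-ones matrix,
`P` is the permutation matrix of translation by the involution `g = (1, 0)`, and `C` is the
adjacency matrix (loops included) of the coset partition of the order-`p` subgroup `K` of
elements `(0, j e₁)`. These are commuting circulant matrices with `J² = |G| • J`, `C² = p • C`
and `P² = 1`. At time `t = 2π / p`, where `p ∣ |G|`, both `exp (-i t J)` and `exp (i t C)` are
the identity while `exp (i t P) = cos t + i sin t • P`, and `sin t ≠ 0` because `p ≥ 3`. -/

section Exponential

open NormedSpace Nat

variable {A : Type*} [NormedRing A] [NormedAlgebra ℂ A] [CompleteSpace A]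

theorem exp_smul_of_isIdempotentElem {E : A} (hE : IsIdempotentElem E) (z : ℂ) :
    exp (z • E) = Complex.exp z • E + (1 - E) := by
  have hsum : HasSum
      (fun n => ((n ! : ℂ)⁻¹ * z ^ n) • E + Pi.single (M := fun _ => A) 0 (1 - E) n)
      (Complex.exp z • E + (1 - E)) := by
    refine HasSum.add ?_ (hasSum_pi_single 0 _)
    rw [Complex.exp_eq_exp_ℂ]
    exact (exp_series_hasSum_exp' (𝕂 := ℂ) z).smul_const E
  refine (exp_series_hasSum_exp' (𝕂 := ℂ) (z • E)).unique (hsum.congr_fun fun n => ?_)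
  rcases n with _ | n
  · simp
  · simp [smul_pow, hE.pow_succ_eq, smul_smul]

theorem exp_smul_eq_one_of_mul_self_eq_smul {M : A} {c : ℂ} (hc : c ≠ 0) (hM : M * M = c • M)
    {z : ℂ} (hz : Complex.exp (z * c) = 1) : exp (z • M) = 1 := by
  have hE : IsIdempotentElem (c⁻¹ • M) := by
    rw [IsIdempotentElem, smul_mul_smul, hM, smul_smul, inv_mul_cancel_right₀ hc]
  rw [show z • M = (z * c) • c⁻¹ • M by rw [smul_smul, mul_inv_cancel_right₀ hc],
    exp_smul_of_isIdempotentElem hE, hz, one_smul, add_sub_cancel]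

theorem exp_smul_of_mul_self_eq_one {P : A} (hP : P * P = 1) (z : ℂ) :
    exp (z • P) = Complex.cosh z • (1 : A) + Complex.sinh z • P := by
  have hpow : ∀ n, P ^ (2 * n) = 1 := fun n => by rw [pow_mul, sq, hP, one_pow]
  refine (exp_series_hasSum_exp' (𝕂 := ℂ) (z • P)).unique (HasSum.even_add_odd ?_ ?_)
  · convert (Complex.hasSum_cosh z).smul_const (1 : A) using 2 with n
    rw [smul_pow, hpow, smul_smul, div_eq_inv_mul]
  · convert (Complex.hasSum_sinh z).smul_const P using 2 with n
    rw [smul_pow, pow_succ P, hpow, one_mul, smul_smul, div_eq_inv_mul]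

end Exponential

section Cayley

variable {G : Type*} [AddCommGroup G] [Fintype G] [DecidableEq G]

theorem cayAdj_eq_circulant (S : Finset G) :
    cayAdj S = circulant fun x => if x ∈ S then 1 else 0 := rfl

theorem cayAdj_singleton (g : G) : cayAdj {g} = circulant (Pi.single g 1) := by
  rw [cayAdj_eq_circulant]
  congr 1
  ext x
  simp [Pi.single_apply]

theorem cayAdj_singleton_zero : cayAdj ({0} : Finset G) = 1 := by
  rw [cayAdj_singleton, circulant_single_one]

theorem commute_cayAdj (S T : Finset G) : Commute (cayAdj S) (cayAdj T) := by
  simp only [Commute, SemiconjBy, cayAdj_eq_circulant]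
  exact circulant_mul_comm _ _

theorem cayAdj_singleton_mulVec_single (g a : G) :
    cayAdj {g} *ᵥ Pi.single a 1 = Pi.single (a + g) 1 := by
  ext x
  simp [cayAdj_singleton, Pi.single_apply, sub_eq_iff_eq_add']

theorem cayAdj_singleton_mul_singleton (g h : G) :
    cayAdj {g} * cayAdj {h} = cayAdj {g + h} := by
  rw [cayAdj_singleton g, cayAdj_singleton h, circulant_mul, ← cayAdj_singleton,
    cayAdj_singleton_mulVec_single, add_comm, cayAdj_singleton]

theorem cayAdj_sdiff {S T : Finset G} (h : T ⊆ S) : cayAdj (S \ T) = cayAdj S - cayAdj T := by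
  ext x y
  by_cases hT : x - y ∈ T
  · simp [cayAdj, hT, h hT]
  · simp [cayAdj, hT]

theorem cayAdj_insert {g : G} {S : Finset G} (h : g ∉ S) :
    cayAdj (insert g S) = cayAdj {g} + cayAdj S := by
  ext x y
  by_cases hg : x - y = g
  · simp [cayAdj, hg, h]
  · simp [cayAdj, hg]

theorem cayAdj_addSubgroup_mul_self (K : AddSubgroup G) [DecidablePred (· ∈ K)] :
    cayAdj {x | x ∈ K} * cayAdj {x | x ∈ K} = (Nat.card K : ℂ) • cayAdj {x | x ∈ K} := by
  rw [cayAdj_eq_circulant, circulant_mul, ← circulant_smul]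
  congr 1
  ext x
  have hterm : ∀ y, (if x - y ∈ K then (1 : ℂ) else 0) * (if y ∈ K then 1 else 0) =
      if y ∈ K then (if x ∈ K then 1 else 0) else 0 := fun y => by
    by_cases hy : y ∈ K
    · simp [hy, sub_eq_add_neg, K.add_mem_cancel_right (K.neg_mem hy)]
    · simp [hy]
  simp only [mulVec, dotProduct, circulant_apply, Finset.mem_filter, Finset.mem_univ, true_and,
    hterm]
  rw [← Finset.sum_filter, Finset.sum_const, nsmul_eq_mul, ← Fintype.card_subtype,
    ← Nat.card_eq_fintype_card]
  rfl

open Complex in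
open scoped Norms.Operator in
theorem cayH_compl_insert_addSubgroup (K : AddSubgroup G) [DecidablePred (· ∈ K)] {g : G}
    (hgK : g ∉ K) (hg : g + g = 0) {t : ℝ} (ht : exp (t * Nat.card K * I) = 1) :
    cayH (Finset.univ \ insert g ({x | x ∈ K} : Finset G)) t =
      (Real.cos t : ℂ) • 1 + (Real.sin t * I) • cayAdj {g} := by
  set J : Matrix G G ℂ := cayAdj Finset.univ
  set P : Matrix G G ℂ := cayAdj {g}
  set C : Matrix G G ℂ := cayAdj {x | x ∈ K}
  have hJt : exp (-(t * Nat.card G * I)) = 1 :=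
    calc exp (-(t * Nat.card G * I)) = (exp (t * Nat.card K * I))⁻¹ ^ K.index := by
          rw [← K.card_mul_index, ← Complex.exp_neg, ← exp_nat_mul]
          push_cast
          ring_nf
      _ = 1 := by rw [ht, inv_one, one_pow]
  have hJ : NormedSpace.exp ((-(t * I)) • J) = 1 := by
    have hJJ : J * J = (Nat.card G : ℂ) • J := by
      classical simpa using cayAdj_addSubgroup_mul_self (⊤ : AddSubgroup G)
    exact exp_smul_eq_one_of_mul_self_eq_smul (Nat.cast_ne_zero.2 Nat.card_pos.ne') hJJ
      (by rwa [neg_mul, mul_right_comm])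
  have hC : NormedSpace.exp (((t : ℂ) * I) • C) = 1 :=
    exp_smul_eq_one_of_mul_self_eq_smul (Nat.cast_ne_zero.2 Nat.card_pos.ne')
      (cayAdj_addSubgroup_mul_self K) (by rwa [mul_right_comm])
  have hP : NormedSpace.exp (((t : ℂ) * I) • P) =
      (Real.cos t : ℂ) • 1 + (Real.sin t * I) • P := by
    rw [ofReal_cos, ofReal_sin, ← cosh_mul_I, ← sinh_mul_I]
    exact exp_smul_of_mul_self_eq_one
      (by rw [cayAdj_singleton_mul_singleton, hg, cayAdj_singleton_zero]) _
  have hA : cayAdj (Finset.univ \ insert g ({x | x ∈ K} : Finset G)) = J - P - C := by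
    rw [cayAdj_sdiff (Finset.subset_univ _), cayAdj_insert (by simpa using hgK),
      sub_add_eq_sub_sub]
  have hsplit : (-(I * t)) • (J - P - C) =
      (-(t * I)) • J + (((t : ℂ) * I) • P + ((t : ℂ) * I) • C) := by
    module
  have hcomm : ∀ (S T : Finset G) (a b : ℂ), Commute (a • cayAdj S) (b • cayAdj T) :=
    fun S T a b => ((commute_cayAdj S T).smul_left a).smul_right b
  rw [cayH, hA, hsplit,
    Matrix.exp_add_of_commute _ _ ((hcomm _ _ _ _).add_right (hcomm _ _ _ _)),
    Matrix.exp_add_of_commute _ _ (hcomm _ _ _ _), hJ, hC, hP, one_mul, mul_one]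

open Complex in
theorem exhibitsFR_compl_insert_addSubgroup (K : AddSubgroup G) [DecidablePred (· ∈ K)]
    (hK : 3 ≤ Nat.card K) {g : G} (hgK : g ∉ K) (hg : g + g = 0) (a : G) :
    ExhibitsFR (Finset.univ \ insert g ({x | x ∈ K} : Finset G)) a (a + g) := by
  have hK' : (3 : ℝ) ≤ Nat.card K := by exact_mod_cast hK
  set t : ℝ := 2 * Real.pi / Nat.card K
  have ht : 0 < t := by positivity
  have hrevival : exp (t * Nat.card K * I) = 1 := by
    rw [show (t : ℂ) * Nat.card K = 2 * Real.pi by push_cast [t]; field_simp]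
    exact exp_two_pi_mul_I
  have hsin : 0 < Real.sin t := Real.sin_pos_of_pos_of_lt_pi ht <| by
    rw [div_lt_iff₀ (by positivity)]
    nlinarith [Real.pi_pos]
  refine ⟨t, ht, Real.cos t, Real.sin t * I, mul_ne_zero (ofReal_ne_zero.2 hsin.ne') I_ne_zero,
    ?_, ?_⟩
  · rw [norm_mul, norm_I, mul_one, norm_real, norm_real, Real.norm_eq_abs, Real.norm_eq_abs,
      sq_abs, sq_abs, Real.cos_sq_add_sin_sq]
  · rw [cayH_compl_insert_addSubgroup K hgK hg hrevival, add_mulVec, smul_mulVec, smul_mulVec,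
      one_mulVec, cayAdj_singleton_mulVec_single]

end Cayley

theorem image_Ico_one_union_zero_eq_range {p : ℕ} [NeZero p] {H : Type*} [AddGroup H]
    [Fintype H] [DecidableEq H] (φ : ZMod p →+ H) [DecidablePred (· ∈ φ.range)] :
    (Finset.Ico 1 p).image (fun j : ℕ => φ j) ∪ {0} = ({x | x ∈ φ.range} : Finset H) := by
  ext z
  simp only [Finset.mem_union, Finset.mem_singleton, Finset.mem_image, Finset.mem_Ico,
    Finset.mem_filter, Finset.mem_univ, true_and, AddMonoidHom.mem_range]
  constructor
  · rintro (⟨j, -, rfl⟩ | rfl)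
    exacts [⟨j, rfl⟩, ⟨0, map_zero φ⟩]
  · rintro ⟨c, rfl⟩
    obtain rfl | hc := eq_or_ne c 0
    · exact Or.inr (map_zero φ)
    · exact Or.inl ⟨c.val, ⟨ZMod.val_pos.2 hc, c.val_lt⟩, by rw [ZMod.natCast_zmod_val]⟩

theorem stmt_18 (p s : ℕ) [NeZero p] (hp : p.Prime) (hpodd : Odd p) (hs : 2 ≤ s) :
    ∀ a b : ZMod 2 × (Fin s → ZMod p),
      b - a = ((1 : ZMod 2), (0 : Fin s → ZMod p)) →
      ExhibitsFR
        (Finset.univ \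
          ((({((1 : ZMod 2), (0 : Fin s → ZMod p))} : Finset (ZMod 2 × (Fin s → ZMod p))) ∪
            ((Finset.Ico 1 p).image fun j : ℕ =>
              ((0 : ZMod 2), Pi.single (⟨0, by omega⟩ : Fin s) ((j : ZMod p))))) ∪ {0}))
        a b := by
  classical
  intro a b hab
  set i₀ : Fin s := ⟨0, by omega⟩
  set g : ZMod 2 × (Fin s → ZMod p) := (1, 0)
  set φ : ZMod p →+ ZMod 2 × (Fin s → ZMod p) :=
    (AddMonoidHom.inr _ _).comp (AddMonoidHom.single (fun _ => ZMod p) i₀)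
  have hφ : Function.Injective φ := fun c c' h => by
    simpa [φ] using congrArg (fun x => x.2 i₀) h
  have hcard : Nat.card φ.range = p := by
    rw [← Nat.card_congr (φ.ofInjective hφ).toEquiv, Nat.card_zmod]
  have hp3 : 3 ≤ p := by
    obtain ⟨k, rfl⟩ := hpodd
    have := hp.two_le
    omega
  have hgφ : g ∉ φ.range := by
    rintro ⟨c, hc⟩
    simpa [φ, g] using congrArg Prod.fst hc
  have hg : g + g = 0 := Prod.ext (show (1 + 1 : ZMod 2) = 0 by decide) (add_zero _)
  have hK : (Finset.Ico 1 p).image (fun j : ℕ => ((0 : ZMod 2), Pi.single i₀ (j : ZMod p)))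
      ∪ {0} = ({x | x ∈ φ.range} : Finset _) :=
    image_Ico_one_union_zero_eq_range φ
  rw [Finset.union_assoc, hK, ← Finset.insert_eq, eq_add_of_sub_eq' hab]
  exact exhibitsFR_compl_insert_addSubgroup φ.range (by rwa [hcard]) hgφ hg a
end
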